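/- Let G be a digraph, H = G ⊠ K_2 the strong product, F_0 a rooted forest of H, and S the set of vertices u of G at which F_0 contains a vertical arc. If F is a uniformly random rooted forest of H conditioned to have the same G-projection as F_0, then the spins (σ_u)_{u∈S} of the vertical arcs of F are independent and each uniform on {0,1}. Equivalently: for every function σ : S → {0,1}, the number of rooted forests of H with the same G-projection as F_0 and with vertical arc spin σ_u at each u ∈ S is the same (namely |F_0's class| / 2^{|S|}). -/

import Mathlib

open scoped Classical
open Polynomial

noncomputable section

/-- A rooted (spanning) forest of the digraph with arc relation `A`:
every vertex has at most one outgoing arc (encoded by `f : V → Option V`),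
all arcs of the forest are arcs of the digraph, and there is no directed cycle. -/
def IsRootedForest {V : Type*} (A : V → V → Prop) (f : V → Option V) : Prop :=
  (∀ v w : V, f v = some w → A v w) ∧
  ∀ v : V, ¬ Relation.TransGen (fun a b : V => f a = some b) v v

/-- The number of components (= roots) of a rooted forest. -/
def numRoots {V : Type*} [Fintype V] (f : V → Option V) : ℕ :=
  (Finset.univ.filter fun v => f v = none).card

/-- The rooted-forest enumerator of a weighted digraph:
`∑_F t^(#components of F) ∏_{arcs (v,w) ∈ F} wgt v w`. -/
def forestEnum {V : Type*} [Fintype V] {R : Type*} [CommRing R]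
    (A : V → V → Prop) (wgt : V → V → R) (t : R) : R :=
  ∑ f ∈ Finset.univ.filter (fun f : V → Option V => IsRootedForest A f),
    ∏ v : V, (f v).elim t (wgt v)

/-- Arc relation of the `n`-dimensional hypercube on `{0,1}^n`:
an arc from `u` to `v` flips exactly one coordinate. -/
def cubeArc (n : ℕ) (u v : Fin n → Bool) : Prop :=
  ∃ i : Fin n, v = Function.update u i (!(u i))

/-- Weight of a hypercube arc: an arc of direction `i` and spin `ε`
(i.e. flipping coordinate `i` to the value `ε`) has weight `x i ε`. -/
def cubeWeight {R : Type*} [CommRing R] (n : ℕ) (x : Fin n → Bool → R)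
    (u v : Fin n → Bool) : R :=
  ∑ i : Fin n, if v = Function.update u i (!(u i)) then x i (v i) else 0

end

/-- Arc relation of the strong product `G ⊠ K₂` of a loopless digraph with arc
relation `A`: straight and diagonal arcs over the arcs of `G`, plus vertical arcs. -/
def strongArc {U : Type*} (A : U → U → Prop) (p q : U × Bool) : Prop :=
  A p.1 q.1 ∨ (p.1 = q.1 ∧ p.2 ≠ q.2)

open scoped Classical in
/-- Two rooted forests of `G ⊠ K₂` have the same `G`-projection: for every arc
`(u,v)` of `G` they contain the same number of straight `(u,v)`-arcs and the same
number of diagonal `(u,v)`-arcs, and they contain vertical arcs at the same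
vertices of `G`. -/
def SameProj {U : Type*} [Fintype U]
    (f g : U × Bool → Option (U × Bool)) : Prop :=
  (∀ u v : U, u ≠ v →
      (Finset.univ.filter fun e : Bool => f (u, e) = some (v, e)).card =
      (Finset.univ.filter fun e : Bool => g (u, e) = some (v, e)).card) ∧
  (∀ u v : U, u ≠ v →
      (Finset.univ.filter fun e : Bool => f (u, e) = some (v, !e)).card =
      (Finset.univ.filter fun e : Bool => g (u, e) = some (v, !e)).card) ∧
  (∀ u : U, (∃ e : Bool, f (u, e) = some (u, !e)) ↔ (∃ e : Bool, g (u, e) = some (u, !e)))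


/-!
By the matrix-forest theorem, `det (1 + L(W)) = ∑_F ∏_{arcs a ∈ F} W a` over the rooted forests
`F`. Give the arcs of `H = G ⊠ K₂` formal weights: `s_{uv}` for the straight and `d_{uv}` for
the diagonal arcs over `(u, v)`, and `z_{u,ε}` for the vertical arc of spin `ε` at `u`. Then the
coefficient of a monomial counts the rooted forests with that multiset of arc labels, and the
forests with the `G`-projection of `F₀` and vertical spins `σ` are exactly those with one
particular monomial. In the basis `e_{u,0} ± e_{u,1}` of each fibre, `1 + L(H)` is block upper
triangular, and its two diagonal blocks involve the `z`'s only through `z_{u,0} + z_{u,1}`. So the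
forest polynomial is invariant under exchanging `z_{u,0}` and `z_{u,1}`, and this exchange maps
the monomial for `σ` to the monomial for any other choice of spins.
-/

open Finset Matrix MvPolynomial

noncomputable section ForestMatrix

variable {V R : Type*} [CommRing R]

def IsAcyclic (f : V → Option V) : Prop :=
  ∀ v : V, ¬ Relation.TransGen (fun a b : V => f a = some b) v v

variable [DecidableEq V]

def stepMatrix (f : V → Option V) : Matrix V V R :=
  of fun p q => if f p = some q then 1 else 0

variable [Fintype V]

def cyclicVertices (f : V → Option V) : Finset V :=
  {r | Relation.TransGen (fun a b => f a = some b) r r}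

theorem card_filter_cyclicVertices_eq (f : V → Option V) (q : V) :
    #{r ∈ cyclicVertices f | f r = some q} = if q ∈ cyclicVertices f then 1 else 0 := by
  set C := cyclicVertices f
  -- `f` maps the cyclic vertices onto themselves, hence bijectively
  have next : ∀ r : C, ∃ s : C, f r = some s.1 := by
    rintro ⟨r, hr⟩
    obtain ⟨s, hs, hsr⟩ := Relation.TransGen.head'_iff.mp (mem_filter.mp hr).2
    exact ⟨⟨s, by simpa [C, cyclicVertices] using Relation.TransGen.tail' hsr hs⟩, hs⟩
  choose g hg using next
  have g_surj : Function.Surjective g := by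
    rintro ⟨s, hs⟩
    obtain ⟨r, hsr, hr⟩ := Relation.TransGen.tail'_iff.mp (mem_filter.mp hs).2
    refine ⟨⟨r, ?_⟩, Subtype.ext ?_⟩
    · simpa [C, cyclicVertices] using Relation.TransGen.head' (r := fun a b => f a = some b) hr hsr
    · simpa [hr] using (hg ⟨r, _⟩).symm
  have g_inj : Function.Injective g := Finite.injective_iff_surjective.mpr g_surj
  split_ifs with hq
  · obtain ⟨r₀, hr₀⟩ := g_surj ⟨q, hq⟩
    refine card_eq_one.mpr ⟨r₀, eq_singleton_iff_unique_mem.mpr ⟨by simp [hg, hr₀], ?_⟩⟩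
    intro r hr
    obtain ⟨hrC, hrq⟩ := mem_filter.mp hr
    have : g ⟨r, hrC⟩ = ⟨q, hq⟩ := Subtype.ext (by simpa [hrq] using (hg ⟨r, hrC⟩).symm)
    exact congrArg Subtype.val (g_inj (this.trans hr₀.symm))
  · refine card_eq_zero.mpr (filter_eq_empty_iff.mpr fun r hrC hrq => hq ?_)
    rw [Option.some_injective _ (hrq.symm.trans (hg ⟨r, hrC⟩))]
    exact (g ⟨r, hrC⟩).2

theorem det_one_sub_stepMatrix_of_isAcyclic {f : V → Option V} (hf : IsAcyclic f) :
    (1 - stepMatrix f : Matrix V V R).det = 1 := by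
  -- ordered by the number of vertices they reach, the vertices make `1 - stepMatrix f` unitriangular
  set reach : V → ℕ := fun p => #{q | Relation.TransGen (fun a b => f a = some b) p q}
  have reach_lt : ∀ p q, f p = some q → reach q < reach p := fun p q hpq =>
    card_lt_card <| ssubset_iff_of_subset (fun r hr => by
        simp only [mem_filter, mem_univ, true_and] at hr ⊢
        exact .head hpq hr) |>.mpr
      ⟨q, by simpa using .single hpq, by simpa using hf q⟩
  have hM : BlockTriangular (1 - stepMatrix f : Matrix V V R)ᵀ reach := by
    intro p q hqp
    have hpq : q ≠ p := by rintro rfl; exact lt_irrefl _ hqp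
    have hfq : f q ≠ some p := fun h => (reach_lt q p h).not_gt hqp
    simp [stepMatrix, one_apply, hpq, hfq]
  rw [← det_transpose, hM.det]
  refine prod_eq_one fun k _ => (congrArg det ?_).trans det_one
  ext ⟨p, hp⟩ ⟨q, hq⟩
  have hfq : f q ≠ some p := fun h => (reach_lt q p h).ne (hp.trans hq.symm)
  simp [toSquareBlock_def, stepMatrix, one_apply, hfq, Subtype.ext_iff]

theorem det_one_sub_stepMatrix_of_not_isAcyclic {f : V → Option V} (hf : ¬ IsAcyclic f) :
    (1 - stepMatrix f : Matrix V V R).det = 0 := by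
  obtain ⟨v, hv⟩ := not_forall_not.mp hf
  set C := cyclicVertices f
  have column_sum : ∀ q, ∑ r ∈ C, (1 - stepMatrix f : Matrix V V R) r q = 0 := by
    intro q
    simp only [Matrix.sub_apply, sum_sub_distrib]
    simp only [one_apply, sum_ite_eq', stepMatrix, of_apply, sum_boole, C,
      card_filter_cyclicVertices_eq]
    split_ifs <;> simp
  have rows : ∑ r, (if r ∈ C then (1 : R) else 0) • (1 - stepMatrix f : Matrix V V R) r = 0 := by
    ext q
    simpa [Finset.sum_apply, ite_smul, ite_apply, Finset.sum_ite_mem] using column_sum q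
  have := det_updateRow_sum (1 - stepMatrix f : Matrix V V R) v fun r => if r ∈ C then 1 else 0
  rw [rows, det_eq_zero_of_row_eq_zero v fun _ => by simp,
    if_pos (by simpa [C, cyclicVertices] using hv), one_smul] at this
  exact this.symm

theorem det_one_sub_stepMatrix (f : V → Option V) :
    (1 - stepMatrix f : Matrix V V R).det = if IsAcyclic f then 1 else 0 := by
  split_ifs with hf
  exacts [det_one_sub_stepMatrix_of_isAcyclic hf, det_one_sub_stepMatrix_of_not_isAcyclic hf]

def laplacian (W : Matrix V V R) : Matrix V V R :=
  diagonal (fun p => ∑ q, W p q) - W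

theorem det_one_add_laplacian (W : Matrix V V R) :
    (1 + laplacian W).det = ∑ f with IsAcyclic f, ∏ p, (f p).elim 1 (W p) := by
  -- row `p` of `1 + laplacian W` is `e_p + ∑_r W p r • (e_p - e_r)`; expand by multilinearity
  set g : V → Option V → V → R := fun p o q =>
    o.elim 1 (W p) * ((if p = q then 1 else 0) - if o = some q then 1 else 0)
  have hrows : 1 + laplacian W = of fun p => ∑ o, g p o := by
    ext p q
    simp [g, laplacian, Fintype.sum_option, one_apply, diagonal_apply, mul_sub, sum_sub_distrib,
      Finset.sum_apply]
  have hterm : ∀ F : V → Option V, (of fun p => g p (F p)) =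
      diagonal (fun p => (F p).elim 1 (W p)) * (1 - stepMatrix F) := by
    intro F
    ext p q
    simp [g, diagonal_mul, stepMatrix, one_apply]
  have hexpand : (of fun p => ∑ o, g p o).det = ∑ F : V → Option V, (of fun p => g p (F p)).det :=
    (detRowAlternating : (V → R) [⋀^V]→ₗ[R] R).map_sum g
  simp only [hrows, hexpand, hterm, det_mul, det_diagonal, det_one_sub_stepMatrix, mul_ite,
    mul_one, mul_zero, sum_ite, sum_const_zero, add_zero]

theorem det_one_add_laplacian_eq_forestEnum (A : V → V → Prop) (W : Matrix V V R)
    (hW : ∀ p q, ¬ A p q → W p q = 0) : (1 + laplacian W).det = forestEnum A W 1 := by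
  rw [det_one_add_laplacian]
  unfold forestEnum
  refine (sum_subset (fun f hf => mem_filter.mpr ⟨by simp, (mem_filter.mp hf).2.2⟩)
    fun f hacyc hf => ?_).symm
  obtain ⟨p, q, hpq, hA⟩ : ∃ p q, f p = some q ∧ ¬ A p q := by
    by_contra! h
    exact hf (mem_filter.mpr ⟨by simp, h, (mem_filter.mp hacyc).2⟩)
  exact prod_eq_zero (mem_univ p) (by simp [hpq, hW p q hA])

end ForestMatrix

noncomputable section LabelledForests

variable {V L : Type*}

def labelWeight (A : V → V → Prop) (lab : V → V → L) : Matrix V V (MvPolynomial L ℤ) :=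
  of fun p q => if p ≠ q ∧ A p q then X (lab p q) else 0

variable [Fintype V]

def labelCount (lab : V → V → L) (f : V → Option V) : L →₀ ℕ :=
  ∑ p, (f p).elim 0 fun q => Finsupp.single (lab p q) 1

theorem labelCount_apply (lab : V → V → L) (f : V → Option V) (l : L) :
    labelCount lab f l = #{p | ∃ q, f p = some q ∧ lab p q = l} := by
  rw [labelCount, Finsupp.finsetSum_apply, card_filter]
  refine sum_congr rfl fun p _ => ?_
  cases f p <;> simp [Finsupp.single_apply]

variable [DecidableEq V]

theorem forestEnum_labelWeight (A : V → V → Prop) (lab : V → V → L) :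
    forestEnum A (labelWeight A lab) 1 =
      ∑ f with IsRootedForest A f, monomial (labelCount lab f) 1 := by
  refine sum_congr (by ext; simp) fun f hf => ?_
  obtain ⟨hA, hacyc⟩ := (mem_filter.mp hf).2
  rw [labelCount, monomial_sum_one]
  refine prod_congr rfl fun p _ => ?_
  cases hp : f p with
  | none => simp
  | some q =>
    have hpq : p ≠ q := by rintro rfl; exact hacyc p (.single hp)
    simp [labelWeight, hpq, hA p q hp, MvPolynomial.X]

theorem coeff_forestEnum_labelWeight (A : V → V → Prop) (lab : V → V → L) (m : L →₀ ℕ) :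
    coeff m (forestEnum A (labelWeight A lab) 1) =
      #{f | IsRootedForest A f ∧ labelCount lab f = m} := by
  simp [forestEnum_labelWeight, MvPolynomial.coeff_sum, MvPolynomial.coeff_monomial, filter_filter]

theorem card_labelCount_eq_of_rename_eq (A : V → V → Prop) (lab : V → V → L) {π : L → L}
    (hπ : Function.Injective π)
    (hsymm : rename π (forestEnum A (labelWeight A lab) 1) = forestEnum A (labelWeight A lab) 1)
    (m : L →₀ ℕ) :
    #{f | IsRootedForest A f ∧ labelCount lab f = m.mapDomain π} =
      #{f | IsRootedForest A f ∧ labelCount lab f = m} := by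
  have := coeff_rename_mapDomain π hπ (forestEnum A (labelWeight A lab) 1) m
  rw [hsymm, coeff_forestEnum_labelWeight, coeff_forestEnum_labelWeight] at this
  exact_mod_cast this

end LabelledForests

section FibreBlocks

variable {n R : Type*} [Fintype n] [DecidableEq n] [CommRing R]

theorem det_fromBlocks_of_add_eq_add (a b c d : Matrix n n R) (h : a + b = c + d) :
    (fromBlocks a b c d).det = (a + b).det * (d - b).det := by
  have hreduce : fromBlocks 1 0 (-1) 1 * fromBlocks a b c d * fromBlocks 1 0 1 1 =
      fromBlocks (a + b) b 0 (d - b) := by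
    simp only [fromBlocks_multiply, Matrix.one_mul, Matrix.mul_one, Matrix.zero_mul,
      Matrix.mul_zero, Matrix.neg_mul, add_zero, zero_add, fromBlocks_inj, true_and]
    exact ⟨by rw [show -a + c + (-b + d) = c + d - (a + b) by abel, h, sub_self], by abel⟩
  have hunit : (fromBlocks 1 0 (-1) 1 : Matrix (n ⊕ n) (n ⊕ n) R).det = 1 := by
    simp
  have := congrArg det hreduce
  rwa [det_mul, det_mul, hunit, one_mul, det_fromBlocks_zero₂₁, det_fromBlocks_zero₁₂, det_one,
    mul_one, mul_one] at this

theorem det_eq_of_fibre_sums_eq (M : Matrix (n × Bool) (n × Bool) R)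
    (h : ∀ u v, M (u, false) (v, false) + M (u, false) (v, true) =
      M (u, true) (v, false) + M (u, true) (v, true)) :
    M.det = (of fun u v => M (u, false) (v, false) + M (u, false) (v, true)).det *
      (of fun u v => M (u, true) (v, true) - M (u, false) (v, true)).det := by
  let e : n × Bool ≃ n ⊕ n := (Equiv.prodComm n Bool).trans (Equiv.boolProdEquivSum n)
  have hblocks : M.reindex e e = fromBlocks (of fun u v => M (u, false) (v, false))
      (of fun u v => M (u, false) (v, true)) (of fun u v => M (u, true) (v, false))
      (of fun u v => M (u, true) (v, true)) := by
    ext (u | u) (v | v) <;> rfl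
  rw [← det_reindex_self e M, hblocks, det_fromBlocks_of_add_eq_add _ _ _ _ (by ext; exact h _ _)]
  rfl

end FibreBlocks

inductive ArcLabel (U : Type*)
  | straight (u v : U)
  | diagonal (u v : U)
  | vertical (u : U) (ε : Bool)

noncomputable section StrongProduct

variable {U : Type*}

instance [Finite U] : Finite (ArcLabel U) :=
  Finite.of_surjective
    (Sum.elim (fun p : U × U => .straight p.1 p.2) <|
      Sum.elim (fun p : U × U => .diagonal p.1 p.2) fun p : U × Bool => .vertical p.1 p.2)
    (by rintro (⟨u, v⟩ | ⟨u, v⟩ | ⟨u, ε⟩) <;> simp)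

/-- Every arc inside a fibre is labelled vertical, with the spin of its head, even when `G` has a
loop there; so straight and diagonal labels only occur over arcs `(u, v)` with `u ≠ v`. -/
def arcLabel (p q : U × Bool) : ArcLabel U :=
  if p.1 = q.1 then .vertical p.1 q.2
  else if p.2 = q.2 then .straight p.1 q.1 else .diagonal p.1 q.1

theorem arcLabel_eq_straight_iff {p q : U × Bool} {u v : U} :
    arcLabel p q = .straight u v ↔ p.1 = u ∧ q.1 = v ∧ u ≠ v ∧ p.2 = q.2 := by
  unfold arcLabel; split_ifs <;> aesop

theorem arcLabel_eq_diagonal_iff {p q : U × Bool} {u v : U} :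
    arcLabel p q = .diagonal u v ↔ p.1 = u ∧ q.1 = v ∧ u ≠ v ∧ p.2 ≠ q.2 := by
  unfold arcLabel; split_ifs <;> aesop

theorem arcLabel_eq_vertical_iff {p q : U × Bool} {u : U} {ε : Bool} :
    arcLabel p q = .vertical u ε ↔ p.1 = u ∧ q.1 = u ∧ q.2 = ε := by
  unfold arcLabel; split_ifs <;> aesop

def flipSpins (c : U → Bool) : ArcLabel U → ArcLabel U
  | .vertical u ε => .vertical u (xor (c u) ε)
  | l => l

theorem flipSpins_involutive (c : U → Bool) : Function.Involutive (flipSpins c) := by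
  rintro (_ | _ | ⟨u, ε⟩) <;> simp [flipSpins]

abbrev strongWeight (A : U → U → Prop) :
    Matrix (U × Bool) (U × Bool) (MvPolynomial (ArcLabel U) ℤ) :=
  labelWeight (strongArc A) arcLabel

theorem strongWeight_apply (A : U → U → Prop) (u v : U) (e e' : Bool) :
    strongWeight A (u, e) (v, e') =
      if u = v then (if e = e' then 0 else X (.vertical u e'))
      else if A u v then X (if e = e' then .straight u v else .diagonal u v) else 0 := by
  by_cases huv : u = v
  · subst huv
    cases e <;> cases e' <;> simp [labelWeight, strongArc, arcLabel]
  · by_cases hA : A u v <;> cases e <;> cases e' <;>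
      simp [labelWeight, strongArc, arcLabel, huv, hA]

variable [Fintype U]

def rowWeight (A : U → U → Prop) (u : U) : MvPolynomial (ArcLabel U) ℤ :=
  ∑ v, if u ≠ v ∧ A u v then X (.straight u v) + X (.diagonal u v) else 0

theorem sum_strongWeight (A : U → U → Prop) (u : U) (e : Bool) :
    ∑ q, strongWeight A (u, e) q = X (.vertical u !e) + rowWeight A u := by
  have fibre : ∀ v, ∑ e', strongWeight A (u, e) (v, e') =
      (if u = v then X (.vertical u !e) else 0) +
        if u ≠ v ∧ A u v then X (.straight u v) + X (.diagonal u v) else 0 := by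
    intro v
    by_cases huv : u = v
    · subst huv; cases e <;> simp [strongWeight_apply]
    · by_cases hA : A u v <;> cases e <;> simp [strongWeight_apply, huv, hA, add_comm]
  rw [Fintype.sum_prod_type, sum_congr rfl fun v _ => fibre v, sum_add_distrib, sum_ite_eq,
    if_pos (mem_univ u), rowWeight]

def fibreSumBlock (A : U → U → Prop) : Matrix U U (MvPolynomial (ArcLabel U) ℤ) :=
  of fun u v => (if u = v then 1 + rowWeight A u else 0) -
    if u ≠ v ∧ A u v then X (.straight u v) + X (.diagonal u v) else 0

def fibreDiffBlock (A : U → U → Prop) : Matrix U U (MvPolynomial (ArcLabel U) ℤ) :=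
  of fun u v =>
    (if u = v then 1 + rowWeight A u + X (.vertical u false) + X (.vertical u true) else 0) -
      if u ≠ v ∧ A u v then X (.straight u v) - X (.diagonal u v) else 0

theorem one_add_laplacian_strongWeight_apply (A : U → U → Prop) (u v : U) (e e' : Bool) :
    (1 + laplacian (strongWeight A)) (u, e) (v, e') =
      (if u = v ∧ e = e' then 1 + X (.vertical u !e) + rowWeight A u else 0) -
        strongWeight A (u, e) (v, e') := by
  simp only [laplacian, Matrix.add_apply, Matrix.sub_apply, one_apply, diagonal_apply,
    Prod.ext_iff, sum_strongWeight]
  split_ifs with h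
  · obtain ⟨rfl, rfl⟩ := h; ring
  · ring

theorem det_one_add_laplacian_strongWeight (A : U → U → Prop) :
    (1 + laplacian (strongWeight A)).det = (fibreSumBlock A).det * (fibreDiffBlock A).det := by
  rw [det_eq_of_fibre_sums_eq]
  all_goals simp only [one_add_laplacian_strongWeight_apply, strongWeight_apply]
  · congr 2 <;> ext u v <;> by_cases huv : u = v <;> by_cases hA : A u v <;>
      simp [fibreSumBlock, fibreDiffBlock, huv, hA] <;> ring
  · intro u v
    by_cases huv : u = v <;> by_cases hA : A u v <;> simp [huv, hA] <;> ring

theorem rename_flipSpins_forestEnum (A : U → U → Prop) (c : U → Bool) :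
    rename (flipSpins c) (forestEnum (strongArc A) (strongWeight A) 1) =
      forestEnum (strongArc A) (strongWeight A) 1 := by
  have hW : ∀ p q, ¬ strongArc A p q → strongWeight A p q = 0 := fun p q h => by
    simp [labelWeight, h]
  rw [← det_one_add_laplacian_eq_forestEnum _ _ hW, det_one_add_laplacian_strongWeight, map_mul,
    AlgHom.map_det, AlgHom.map_det]
  congr 2 <;> ext u v : 2
  all_goals simp only [AlgHom.mapMatrix_apply, map_apply, fibreSumBlock, fibreDiffBlock, of_apply,
    rowWeight, map_sub, map_add, _root_.map_one, map_zero, map_sum,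
    apply_ite (rename (flipSpins c)), rename_X, flipSpins]
  cases c u <;> simp [add_right_comm _ (X (ArcLabel.vertical u true))]

end StrongProduct

noncomputable section SpinClasses

variable {U : Type*}

theorem card_filter_fst_eq_and {α β : Type*} [Fintype α] [DecidableEq α] [Fintype β] (a : α)
    (P : β → Prop) [DecidablePred P] : #{p : α × β | p.1 = a ∧ P p.2} = #{b | P b} := by
  rw [← card_map ⟨Prod.mk a, Prod.mk_right_injective a⟩ (s := {b | P b})]
  congr 1
  ext ⟨a', b⟩
  simp [eq_comm, and_comm]

theorem card_vertical_of_isRootedForest {A : U → U → Prop} {f : U × Bool → Option (U × Bool)}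
    (hf : IsRootedForest (strongArc A) f) (u : U) (ε : Bool) :
    #{e | f (u, e) = some (u, ε)} = if f (u, !ε) = some (u, ε) then 1 else 0 := by
  have hloop : f (u, ε) ≠ some (u, ε) := fun h => hf.2 _ (.single h)
  rw [card_filter, Fintype.sum_bool]
  cases ε <;> simp_all

theorem vertical_spins_iff {A : U → U → Prop} {f : U × Bool → Option (U × Bool)}
    (hf : IsRootedForest (strongArc A) f) (u : U) (P : Prop) (s : Bool) :
    (∀ ε, (f (u, !ε) = some (u, ε) ↔ P ∧ s = ε)) ↔
      (((∃ e, f (u, e) = some (u, !e)) ↔ P) ∧ (P → f (u, !s) = some (u, s))) := by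
  have no_two_cycle : ¬ (f (u, false) = some (u, true) ∧ f (u, true) = some (u, false)) :=
    fun ⟨h₁, h₂⟩ => hf.2 _ (.head h₁ (.single h₂))
  cases s <;> simp only [Bool.forall_bool, Bool.exists_bool] at no_two_cycle ⊢ <;> simp <;> tauto

variable [Fintype U]

theorem labelCount_straight (f : U × Bool → Option (U × Bool)) (u v : U) :
    labelCount arcLabel f (.straight u v) = #{e | u ≠ v ∧ f (u, e) = some (v, e)} := by
  rw [labelCount_apply, ← card_filter_fst_eq_and (β := Bool) u]
  congr 1
  ext ⟨w, e⟩
  simp only [mem_filter, mem_univ, true_and, arcLabel_eq_straight_iff]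
  constructor
  · rintro ⟨⟨v', e'⟩, hf, rfl, rfl, huv, rfl⟩; exact ⟨rfl, huv, hf⟩
  · rintro ⟨rfl, huv, hf⟩; exact ⟨_, hf, rfl, rfl, huv, rfl⟩

theorem labelCount_diagonal (f : U × Bool → Option (U × Bool)) (u v : U) :
    labelCount arcLabel f (.diagonal u v) = #{e | u ≠ v ∧ f (u, e) = some (v, !e)} := by
  rw [labelCount_apply, ← card_filter_fst_eq_and (β := Bool) u]
  congr 1
  ext ⟨w, e⟩
  simp only [mem_filter, mem_univ, true_and, arcLabel_eq_diagonal_iff]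
  constructor
  · rintro ⟨⟨v', e'⟩, hf, rfl, rfl, huv, he⟩
    obtain rfl : e' = !e := by cases e <;> cases e' <;> simp_all
    exact ⟨rfl, huv, hf⟩
  · rintro ⟨rfl, huv, hf⟩; exact ⟨_, hf, rfl, rfl, huv, by cases e <;> simp⟩

theorem labelCount_vertical (f : U × Bool → Option (U × Bool)) (u : U) (ε : Bool) :
    labelCount arcLabel f (.vertical u ε) = #{e | f (u, e) = some (u, ε)} := by
  rw [labelCount_apply, ← card_filter_fst_eq_and (β := Bool) u]
  congr 1
  ext ⟨w, e⟩
  simp only [mem_filter, mem_univ, true_and, arcLabel_eq_vertical_iff]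
  constructor
  · rintro ⟨⟨v', e'⟩, hf, rfl, rfl, rfl⟩; exact ⟨rfl, hf⟩
  · rintro ⟨rfl, hf⟩; exact ⟨_, hf, rfl, rfl, rfl⟩

def spinTarget (f0 : U × Bool → Option (U × Bool)) (σ : U → Bool) : ArcLabel U →₀ ℕ :=
  Finsupp.equivFunOnFinite.symm fun
    | .straight u v => #{e | u ≠ v ∧ f0 (u, e) = some (v, e)}
    | .diagonal u v => #{e | u ≠ v ∧ f0 (u, e) = some (v, !e)}
    | .vertical u ε => if (∃ e, f0 (u, e) = some (u, !e)) ∧ σ u = ε then 1 else 0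

theorem mapDomain_flipSpins_spinTarget (f0 : U × Bool → Option (U × Bool)) (σ τ : U → Bool) :
    (spinTarget f0 σ).mapDomain (flipSpins fun u => xor (σ u) (τ u)) = spinTarget f0 τ := by
  ext l
  rw [← flipSpins_involutive (fun u => xor (σ u) (τ u)) l,
    Finsupp.mapDomain_apply (flipSpins_involutive _).injective]
  rcases l with _ | _ | ⟨u, ε⟩ <;> simp [spinTarget, flipSpins]
  cases σ u <;> cases τ u <;> cases ε <;> simp

theorem labelCount_eq_spinTarget_iff {A : U → U → Prop} {f : U × Bool → Option (U × Bool)}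
    (hf : IsRootedForest (strongArc A) f) (f0 : U × Bool → Option (U × Bool)) (σ : U → Bool) :
    labelCount arcLabel f = spinTarget f0 σ ↔
      SameProj f f0 ∧ ∀ u, (∃ e, f0 (u, e) = some (u, !e)) → f (u, !(σ u)) = some (u, σ u) := by
  have forall_label : ∀ P : ArcLabel U → Prop, (∀ l, P l) ↔
      (∀ u v, P (.straight u v)) ∧ (∀ u v, P (.diagonal u v)) ∧ ∀ u ε, P (.vertical u ε) :=
    fun P => ⟨fun h => ⟨fun _ _ => h _, fun _ _ => h _, fun _ _ => h _⟩,
      fun ⟨h₁, h₂, h₃⟩ l => by cases l <;> apply_assumption⟩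
  have off_diagonal : ∀ P Q : U → U → Bool → Prop, [∀ u v, DecidablePred (P u v)] →
      [∀ u v, DecidablePred (Q u v)] →
      ((∀ u v, #{e | u ≠ v ∧ P u v e} = #{e | u ≠ v ∧ Q u v e}) ↔
        ∀ u v, u ≠ v → #{e | P u v e} = #{e | Q u v e}) :=
    fun P Q _ _ => forall₂_congr fun u v => by by_cases huv : u = v <;> simp [huv]
  have boole_eq : ∀ P Q : Prop, [Decidable P] → [Decidable Q] →
      ((if P then 1 else 0 : ℕ) = if Q then 1 else 0) ↔ (P ↔ Q) := by
    intro P Q _ _; split_ifs <;> simp_all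
  simp only [DFunLike.ext_iff, forall_label, labelCount_straight, labelCount_diagonal,
    labelCount_vertical, card_vertical_of_isRootedForest hf, spinTarget,
    Finsupp.coe_equivFunOnFinite_symm, off_diagonal, boole_eq, vertical_spins_iff hf, SameProj,
    forall_and, and_assoc]

theorem natCard_spinClass (A : U → U → Prop) (f0 : U × Bool → Option (U × Bool)) (σ : U → Bool) :
    Nat.card {f : U × Bool → Option (U × Bool) //
        IsRootedForest (strongArc A) f ∧ SameProj f f0 ∧
        ∀ u : U, (∃ e : Bool, f0 (u, e) = some (u, !e)) → f (u, !(σ u)) = some (u, σ u)} =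
      #{f | IsRootedForest (strongArc A) f ∧ labelCount arcLabel f = spinTarget f0 σ} := by
  rw [Nat.card_eq_fintype_card, Fintype.card_subtype]
  exact congrArg card <| filter_congr fun f _ =>
    and_congr_right fun hf => (labelCount_eq_spinTarget_iff hf f0 σ).symm

end SpinClasses

theorem strong_product_spin_independence_general {U : Type*} [Fintype U]
    (A : U → U → Prop)
    (f0 : U × Bool → Option (U × Bool))
    (σ τ : U → Bool) :
    Nat.card {f : U × Bool → Option (U × Bool) //
        IsRootedForest (strongArc A) f ∧ SameProj f f0 ∧
        ∀ u : U, (∃ e : Bool, f0 (u, e) = some (u, !e)) →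
          f (u, !(σ u)) = some (u, σ u)} =
    Nat.card {f : U × Bool → Option (U × Bool) //
        IsRootedForest (strongArc A) f ∧ SameProj f f0 ∧
        ∀ u : U, (∃ e : Bool, f0 (u, e) = some (u, !e)) →
          f (u, !(τ u)) = some (u, τ u)} := by
  rw [natCard_spinClass, natCard_spinClass, ← mapDomain_flipSpins_spinTarget f0 σ τ]
  exact (card_labelCount_eq_of_rename_eq _ _ (flipSpins_involutive _).injective
    (rename_flipSpins_forestEnum A _) _).symm

/-- Spin independence theorem: among the rooted forests of `H = G ⊠ K₂` with the
same `G`-projection as a given rooted forest `f0`, for each prescription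
`σ` of the spins of the vertical arcs (at the vertices `u` of `G` where `f0` has a
vertical arc) the number of forests realizing it is the same; i.e. the spins of the
vertical arcs of a uniformly random such forest are independent and uniform. -/
theorem strong_product_spin_independence {U : Type*} [Fintype U]
    (A : U → U → Prop) (hA : ∀ u : U, ¬ A u u)
    (f0 : U × Bool → Option (U × Bool)) (hf0 : IsRootedForest (strongArc A) f0)
    (σ τ : U → Bool) :
    Nat.card {f : U × Bool → Option (U × Bool) //
        IsRootedForest (strongArc A) f ∧ SameProj f f0 ∧
        ∀ u : U, (∃ e : Bool, f0 (u, e) = some (u, !e)) →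
          f (u, !(σ u)) = some (u, σ u)} =
    Nat.card {f : U × Bool → Option (U × Bool) //
        IsRootedForest (strongArc A) f ∧ SameProj f f0 ∧
        ∀ u : U, (∃ e : Bool, f0 (u, e) = some (u, !e)) →
          f (u, !(τ u)) = some (u, τ u)} :=
  strong_product_spin_independence_general A f0 σ τ
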